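/- arXiv:2507.08522 — 3 statements merged into one kernel-verified Lean document; each statement's English description precedes it below -/
import Mathlib

section
/- Let V be a real vector space with a symmetric bilinear form Q, and let β, α ∈ V satisfy Q(β,β) = 0 and Q(β,α) > 0, with Q(α,α) > 0. Suppose Q is negative semidefinite on the hyperplane P = {γ : Q(α,γ) = 0}. Then every γ ∈ V with Q(β,γ) = 0 satisfies Q(γ,γ) ≤ 0. -/
/-! Subtracting a multiple of the isotropic vector `β` from a vector `γ ⊥ β` does not change
`Q(γ, γ)`, and since `Q(α, β) ≠ 0` the multiple can be chosen to move `γ` into `α^⊥`,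
where `Q` is negative semidefinite. -/

namespace LinearMap

theorem apply_sub_smul_self_of_isotropic {R V : Type*} [CommRing R] [AddCommGroup V]
    [Module R V] (Q : V →ₗ[R] V →ₗ[R] R) {β γ : V} (hββ : Q β β = 0) (hβγ : Q β γ = 0)
    (hγβ : Q γ β = 0) (t : R) : Q (γ - t • β) (γ - t • β) = Q γ γ := by
  simp only [map_sub, map_smul, sub_apply, smul_apply, smul_eq_mul, hββ, hβγ, hγβ]
  ring

theorem apply_sub_div_smul_eq_zero {K V : Type*} [Field K] [AddCommGroup V] [Module K V]
    (Q : V →ₗ[K] V →ₗ[K] K) {α β : V} (hαβ : Q α β ≠ 0) (γ : V) :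
    Q α (γ - (Q α γ / Q α β) • β) = 0 := by
  rw [map_sub, map_smul, smul_eq_mul, div_mul_cancel₀ _ hαβ, sub_self]

end LinearMap

theorem stmt2_general {V : Type*} [AddCommGroup V] [Module ℝ V]
    (Q : V →ₗ[ℝ] V →ₗ[ℝ] ℝ) (hQ : ∀ x y, Q x y = Q y x)
    (β α : V) (hββ : Q β β = 0) (hβα : 0 < Q β α)
    (hneg : ∀ δ : V, Q α δ = 0 → Q δ δ ≤ 0) :
    ∀ γ : V, Q β γ = 0 → Q γ γ ≤ 0 := by
  intro γ hβγ
  have hαβ : Q α β ≠ 0 := (hQ α β).trans_ne hβα.ne'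
  set δ := γ - (Q α γ / Q α β) • β
  calc Q γ γ = Q δ δ :=
        (Q.apply_sub_smul_self_of_isotropic hββ hβγ ((hQ γ β).trans hβγ) _).symm
    _ ≤ 0 := hneg δ (Q.apply_sub_div_smul_eq_zero hαβ γ)

/-- Degenerate case of the Hodge index theorem. -/
theorem stmt2 {V : Type*} [AddCommGroup V] [Module ℝ V]
    (Q : V →ₗ[ℝ] V →ₗ[ℝ] ℝ) (hQ : ∀ x y, Q x y = Q y x)
    (β α : V) (hββ : Q β β = 0) (hβα : 0 < Q β α) (hαα : 0 < Q α α)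
    (hneg : ∀ δ : V, Q α δ = 0 → Q δ δ ≤ 0) :
    ∀ γ : V, Q β γ = 0 → Q γ γ ≤ 0 :=
  stmt2_general Q hQ β α hββ hβα hneg
end

section
/- Let l ≥ 1, let r₁,…,r_l be positive real numbers with r = r₁+⋯+r_l, and let μ₁ > μ₂ > ⋯ > μ_l be real numbers. Set μ = (∑_{i=1}^{l} r_i μ_i)/r. Then ∑_{1 ≤ i < j ≤ l} r_i r_j (μ_i − μ_j)² ≤ r² (μ₁ − μ)(μ − μ_l). -/
/-- Langer's combinatorial lemma. -/
theorem stmt5 (n : ℕ) (rr : Fin (n + 1) → ℝ) (hr : ∀ i, 0 < rr i)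
    (μ : Fin (n + 1) → ℝ) (hμ : ∀ i j : Fin (n + 1), i < j → μ j < μ i)
    (r : ℝ) (hrsum : r = ∑ i, rr i)
    (μbar : ℝ) (hμbar : μbar = (∑ i, rr i * μ i) / r) :
    ∑ i, ∑ j ∈ Finset.univ.filter (fun j => i < j), rr i * rr j * (μ i - μ j) ^ 2
      ≤ r ^ 2 * ((μ 0 - μbar) * (μbar - μ (Fin.last n))) := by
  have hr0 : 0 < r := by
    rw [hrsum]; exact Finset.sum_pos (fun i _ => hr i) Finset.univ_nonempty
  have hμ' : ∀ i j : Fin (n + 1), i ≤ j → μ j ≤ μ i := by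
    intro i j hij
    rcases eq_or_lt_of_le hij with h | h
    · simp [h]
    · exact (hμ i j h).le
  have hrμ : r * μbar = ∑ i, rr i * μ i := by
    rw [hμbar]; field_simp
  have hA : r * (μ 0 - μbar) = ∑ i, rr i * (μ 0 - μ i) := by
    have : ∑ i, rr i * (μ 0 - μ i) = (∑ i, rr i) * μ 0 - ∑ i, rr i * μ i := by
      rw [Finset.sum_mul, ← Finset.sum_sub_distrib]
      exact Finset.sum_congr rfl fun i _ => by ring
    rw [this, ← hrsum, ← hrμ]; ring
  have hB : r * (μbar - μ (Fin.last n)) = ∑ i, rr i * (μ i - μ (Fin.last n)) := by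
    have : ∑ i, rr i * (μ i - μ (Fin.last n)) =
        (∑ i, rr i * μ i) - (∑ i, rr i) * μ (Fin.last n) := by
      rw [Finset.sum_mul, ← Finset.sum_sub_distrib]
      exact Finset.sum_congr rfl fun i _ => by ring
    rw [this, ← hrsum, ← hrμ]; ring
  have key : r ^ 2 * ((μ 0 - μbar) * (μbar - μ (Fin.last n)))
      = ∑ i, ∑ j, rr i * rr j * ((μ 0 - μ j) * (μ i - μ (Fin.last n))) := by
    have : r ^ 2 * ((μ 0 - μbar) * (μbar - μ (Fin.last n)))
        = (r * (μbar - μ (Fin.last n))) * (r * (μ 0 - μbar)) := by ring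
    rw [this, hA, hB, Finset.sum_mul_sum]
    exact Finset.sum_congr rfl fun i _ => Finset.sum_congr rfl fun j _ => by ring
  rw [key]
  have step1 : ∀ i : Fin (n + 1),
      ∑ j ∈ Finset.univ.filter (fun j => i < j), rr i * rr j * (μ i - μ j) ^ 2
      ≤ ∑ j ∈ Finset.univ.filter (fun j => i < j),
          rr i * rr j * ((μ 0 - μ j) * (μ i - μ (Fin.last n))) := by
    intro i
    apply Finset.sum_le_sum
    intro j hj
    have hij : i < j := (Finset.mem_filter.mp hj).2
    have h1 : 0 ≤ μ i - μ j := sub_nonneg.mpr (hμ i j hij).le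
    have h2 : μ i - μ j ≤ μ 0 - μ j := by
      have := hμ' 0 i (Fin.zero_le i); linarith
    have h3 : μ i - μ j ≤ μ i - μ (Fin.last n) := by
      have := hμ' j (Fin.last n) (Fin.le_last j); linarith
    have hsq : (μ i - μ j) ^ 2 ≤ (μ 0 - μ j) * (μ i - μ (Fin.last n)) := by
      rw [sq]
      exact mul_le_mul h2 h3 h1 (by linarith)
    exact mul_le_mul_of_nonneg_left hsq (mul_pos (hr i) (hr j)).le
  calc ∑ i, ∑ j ∈ Finset.univ.filter (fun j => i < j), rr i * rr j * (μ i - μ j) ^ 2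
      ≤ ∑ i, ∑ j ∈ Finset.univ.filter (fun j => i < j),
          rr i * rr j * ((μ 0 - μ j) * (μ i - μ (Fin.last n))) :=
        Finset.sum_le_sum fun i _ => step1 i
    _ ≤ ∑ i, ∑ j, rr i * rr j * ((μ 0 - μ j) * (μ i - μ (Fin.last n))) := by
        apply Finset.sum_le_sum
        intro i _
        apply Finset.sum_le_sum_of_subset_of_nonneg (Finset.filter_subset _ _)
        intro j _ _
        have h2 : 0 ≤ μ 0 - μ j := sub_nonneg.mpr (hμ' 0 j (Fin.zero_le j))
        have h3 : 0 ≤ μ i - μ (Fin.last n) := sub_nonneg.mpr (hμ' i (Fin.last n) (Fin.le_last i))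
        have := (hr i).le
        have := (hr j).le
        positivity
end

section
/- Let V be a real vector space with a symmetric bilinear form Q, and let β ∈ V with Q(β,β) > 0 such that Q(β,β)·Q(δ,δ) ≤ Q(β,δ)² for all δ ∈ V. Let l ≥ 1, r₁,…,r_l > 0 with r = ∑ r_i, and v₁,…,v_l ∈ V with Q(β, v_i) = r_i·μ_i where μ₁ > ⋯ > μ_l and μ = (∑ r_i μ_i)/r. Then ∑_{1 ≤ i < j ≤ l} r_i r_j · Q(v_i/r_i − v_j/r_j, v_i/r_i − v_j/r_j) ≤ (r²/Q(β,β)) · (μ₁ − μ)(μ − μ_l). -/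
/-- Hodge index bound combined with Langer's combinatorial lemma. -/
theorem stmt14 {V : Type*} [AddCommGroup V] [Module ℝ V]
    (Q : V →ₗ[ℝ] V →ₗ[ℝ] ℝ) (hQ : ∀ x y, Q x y = Q y x)
    (β : V) (hβ : 0 < Q β β)
    (hodge : ∀ δ : V, Q β β * Q δ δ ≤ (Q β δ) ^ 2)
    (n : ℕ) (rr : Fin (n + 1) → ℝ) (hr : ∀ i, 0 < rr i)
    (r : ℝ) (hrsum : r = ∑ i, rr i)
    (v : Fin (n + 1) → V) (μ : Fin (n + 1) → ℝ)
    (hv : ∀ i, Q β (v i) = rr i * μ i)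
    (hμ : ∀ i j : Fin (n + 1), i < j → μ j < μ i)
    (μbar : ℝ) (hμbar : μbar = (∑ i, rr i * μ i) / r) :
    ∑ i, ∑ j ∈ Finset.univ.filter (fun j => i < j),
        rr i * rr j *
          Q ((rr i)⁻¹ • v i - (rr j)⁻¹ • v j) ((rr i)⁻¹ • v i - (rr j)⁻¹ • v j)
      ≤ r ^ 2 / Q β β * ((μ 0 - μbar) * (μbar - μ (Fin.last n))) := by
  have hr0 : (0:ℝ) < r := by
    rw [hrsum]
    exact Finset.sum_pos (fun i _ => hr i) ⟨0, Finset.mem_univ 0⟩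
  have hμle : ∀ i j : Fin (n+1), i ≤ j → μ j ≤ μ i := by
    intro i j h
    rcases eq_or_lt_of_le h with rfl | h
    · exact le_refl _
    · exact (hμ i j h).le
  have hQδ : ∀ i j : Fin (n+1),
      Q β ((rr i)⁻¹ • v i - (rr j)⁻¹ • v j) = μ i - μ j := by
    intro i j
    have hi := (hr i).ne'
    have hj := (hr j).ne'
    have : Q β ((rr i)⁻¹ • v i - (rr j)⁻¹ • v j)
        = (rr i)⁻¹ * (rr i * μ i) - (rr j)⁻¹ * (rr j * μ j) := by
      simp [map_sub, map_smul, hv, smul_eq_mul]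
    rw [this]
    field_simp
  have hsum : ∑ i, rr i * μ i = r * μbar := by
    rw [hμbar]; field_simp
  -- Step 1: Hodge index per term
  have step1 : ∀ i j : Fin (n+1), i < j →
      rr i * rr j *
        Q ((rr i)⁻¹ • v i - (rr j)⁻¹ • v j) ((rr i)⁻¹ • v i - (rr j)⁻¹ • v j)
      ≤ rr i * rr j * ((μ i - μ j)^2 / Q β β) := by
    intro i j hij
    apply mul_le_mul_of_nonneg_left _ (mul_pos (hr i) (hr j)).le
    rw [le_div_iff₀ hβ]
    have h := hodge ((rr i)⁻¹ • v i - (rr j)⁻¹ • v j)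
    rw [hQδ i j] at h
    nlinarith [hβ]
  -- Step 2: Langer's combinatorial bound per term
  have step2 : ∀ i j : Fin (n+1), i < j →
      (μ i - μ j)^2 ≤ (μ 0 - μ j) * (μ i - μ (Fin.last n)) := by
    intro i j hij
    have h1 : μ j < μ i := hμ i j hij
    have h2 : μ i ≤ μ 0 := hμle 0 i (Fin.zero_le i)
    have h3 : μ (Fin.last n) ≤ μ j := hμle j (Fin.last n) (Fin.le_last j)
    nlinarith
  calc ∑ i, ∑ j ∈ Finset.univ.filter (fun j => i < j),
        rr i * rr j *
          Q ((rr i)⁻¹ • v i - (rr j)⁻¹ • v j) ((rr i)⁻¹ • v i - (rr j)⁻¹ • v j)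
      ≤ ∑ i, ∑ j ∈ Finset.univ.filter (fun j => i < j),
          rr i * rr j * ((μ 0 - μ j) * (μ i - μ (Fin.last n)) / Q β β) := by
        apply Finset.sum_le_sum; intro i _
        apply Finset.sum_le_sum; intro j hj
        have hij : i < j := (Finset.mem_filter.mp hj).2
        refine (step1 i j hij).trans ?_
        apply mul_le_mul_of_nonneg_left _ (mul_pos (hr i) (hr j)).le
        exact div_le_div_of_nonneg_right (step2 i j hij) hβ.le |>.trans_eq rfl
    _ ≤ ∑ i : Fin (n+1), ∑ j : Fin (n+1),
          rr i * rr j * ((μ 0 - μ j) * (μ i - μ (Fin.last n)) / Q β β) := by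
        apply Finset.sum_le_sum; intro i _
        apply Finset.sum_le_sum_of_subset_of_nonneg (Finset.filter_subset _ _)
        intro j _ _
        have h2 : 0 ≤ μ 0 - μ j := by linarith [hμle 0 j (Fin.zero_le j)]
        have h3 : 0 ≤ μ i - μ (Fin.last n) := by linarith [hμle i (Fin.last n) (Fin.le_last i)]
        have := (hr i).le
        have := (hr j).le
        positivity
    _ = (∑ i, rr i * (μ i - μ (Fin.last n))) * (∑ j, rr j * (μ 0 - μ j)) / Q β β := by
        rw [Finset.sum_mul_sum]
        rw [Finset.sum_div]
        apply Finset.sum_congr rfl; intro i _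
        rw [Finset.sum_div]
        apply Finset.sum_congr rfl; intro j _
        ring
    _ = r ^ 2 / Q β β * ((μ 0 - μbar) * (μbar - μ (Fin.last n))) := by
        have hA : ∑ j, rr j * (μ 0 - μ j) = r * (μ 0 - μbar) := by
          simp only [mul_sub]
          rw [Finset.sum_sub_distrib, hsum, ← Finset.sum_mul, ← hrsum]
        have hB : ∑ i, rr i * (μ i - μ (Fin.last n)) = r * (μbar - μ (Fin.last n)) := by
          simp only [mul_sub]
          rw [Finset.sum_sub_distrib, hsum, ← Finset.sum_mul, ← hrsum]
        rw [hA, hB]; ring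
end
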